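/- arXiv:2206.07592 — 10 statements merged into one kernel-verified Lean document; each statement's English description precedes it below -/
import Mathlib

section
/- Let d ≥ 1, let 0 < ε < 1 and 0 < γ < 1, let o, q, p, p' ∈ ℝ^d and let r_B > 0. If ‖q − o‖ ≥ (3+γ)·ε⁻¹·r_B, ‖p − o‖ ≤ (1 + γ/2)·r_B, and ‖p' − o‖ ≤ r_B, then ‖p − q‖ ≥ (1−ε)·‖p' − q‖. (Hence any point of a finite set P lying in the enlarged ball closedBall(o, (1+γ/2)·r_B) is an (ε, γ/2)-approximate in-range farthest point of q in P ∩ closedBall(o, r_B).) -/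
/-- Strengthened Claim 5.1 (cl-far): if the query point `q` is far from the center `o`
of the query ball, then any point `p` of the enlarged ball `closedBall o ((1+γ/2)·r_B)`
is an `(ε, γ/2)`-approximate in-range farthest point of `q`. -/
theorem stmt0 (d : ℕ) (hd : 1 ≤ d) (ε γ : ℝ) (hε : 0 < ε) (hε1 : ε < 1)
    (hγ : 0 < γ) (hγ1 : γ < 1)
    (o q p p' : EuclideanSpace ℝ (Fin d)) (r_B : ℝ) (hr : 0 < r_B)
    (hq : ‖q - o‖ ≥ (3 + γ) * ε⁻¹ * r_B)
    (hp : ‖p - o‖ ≤ (1 + γ / 2) * r_B)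
    (hp' : ‖p' - o‖ ≤ r_B) :
    ‖p - q‖ ≥ (1 - ε) * ‖p' - q‖ := by
  have h1 : ‖q - o‖ - ‖p - o‖ ≤ ‖p - q‖ := by
    have h := norm_sub_norm_le (q - o) (p - o)
    rw [show q - o - (p - o) = q - p by abel, norm_sub_rev q p] at h
    exact h
  have h2 : ‖p' - q‖ ≤ ‖p' - o‖ + ‖q - o‖ := by
    calc ‖p' - q‖ = ‖(p' - o) - (q - o)‖ := by rw [sub_sub_sub_cancel_right]
      _ ≤ ‖p' - o‖ + ‖q - o‖ := norm_sub_le _ _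
  have hεq : ε * ‖q - o‖ ≥ (3 + γ) * r_B := by
    have := mul_le_mul_of_nonneg_left hq hε.le
    rw [show ε * ((3 + γ) * ε⁻¹ * r_B) = (3 + γ) * r_B * (ε * ε⁻¹) by ring,
      mul_inv_cancel₀ hε.ne', mul_one] at this
    linarith
  nlinarith [norm_nonneg (p' - q), norm_nonneg (q - o)]
end

section
/- Let ξ > 0 and 0 < ε < 1 satisfy (1−ε)·(1+ξ)² ≤ 1. Let P ⊆ ℝ^d be a finite set, let o, q ∈ ℝ^d, r_B > 0, r > 0, and let p ∈ P be such that: ‖p − o‖ ≤ (1+ξ)·r_B, ‖p − q‖ ≥ (1+ξ)⁻¹·r, and every x ∈ P with ‖x − o‖ ≤ r_B satisfies ‖x − q‖ ≤ (1+ξ)·r. Then for every x ∈ P with ‖x − o‖ ≤ r_B one has (1−ε)·‖x − q‖ ≤ ‖p − q‖; that is, p is certified as an (ε, ξ)-approximate in-range farthest point of q in P ∩ closedBall(o, r_B). -/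
/-- Core correctness of the ball-peeling strategy (Query-CAIFP): a ball-difference
certificate `‖p − q‖ ≥ (1+ξ)⁻¹·r` together with a failed query certifying that all
in-range points are within distance `(1+ξ)·r` of `q` makes `p` an `(ε, ξ)`-AIFP. -/
theorem stmt1 (d : ℕ) (ξ ε : ℝ) (hξ : 0 < ξ) (hε : 0 < ε) (hε1 : ε < 1)
    (hεξ : (1 - ε) * (1 + ξ) ^ 2 ≤ 1)
    (P : Finset (EuclideanSpace ℝ (Fin d)))
    (o q : EuclideanSpace ℝ (Fin d)) (r_B r : ℝ) (hrB : 0 < r_B) (hr : 0 < r)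
    (p : EuclideanSpace ℝ (Fin d)) (hpP : p ∈ P)
    (hpo : ‖p - o‖ ≤ (1 + ξ) * r_B)
    (hpq : ‖p - q‖ ≥ (1 + ξ)⁻¹ * r)
    (hall : ∀ x ∈ P, ‖x - o‖ ≤ r_B → ‖x - q‖ ≤ (1 + ξ) * r) :
    ∀ x ∈ P, ‖x - o‖ ≤ r_B → (1 - ε) * ‖x - q‖ ≤ ‖p - q‖ := by
  intro x hx hxo
  have hξ1 : (0:ℝ) < 1 + ξ := by linarith
  have h1 : ‖x - q‖ ≤ (1 + ξ) * r := hall x hx hxo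
  have h2 : (1 - ε) * ((1 + ξ) * r) ≤ (1 + ξ)⁻¹ * r := by
    rw [inv_eq_one_div, div_mul_eq_mul_div, le_div_iff₀ hξ1]
    nlinarith [mul_pos hξ1 hr, inv_pos.mpr hξ1, mul_inv_cancel₀ (ne_of_gt hξ1)]
  calc (1 - ε) * ‖x - q‖ ≤ (1 - ε) * ((1 + ξ) * r) := by nlinarith
    _ ≤ (1 + ξ)⁻¹ * r := h2
    _ ≤ ‖p - q‖ := hpq
end

section
/- Let a be a positive integer, η > 0 and 0 ≤ s < 1 satisfy a·η² ≥ (2s + 2η/3)·log 3, and let t := (s + η)·a. Let (Ω, μ) be a probability space and let Z_i : Ω → Bool for i ∈ Fin a be mutually independent Boolean random variables with μ{ω : Z_i ω = true} ≤ s for every i. Then μ{ ω : |{i : Z_i ω = true}| ≥ t } ≤ 1/3. -/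
/-!
Chernoff: for `λ ≥ 0`, `μ {N ≥ t} ≤ e^{-λt} 𝔼 e^{λN} ≤ exp (a s (e^λ - 1) - λ t)`, where `N` is the
number of successes. Bernstein's estimate `e^λ - 1 - λ ≤ λ² / (2 (1 - λ/3))` for `λ < 3`, at
`λ = 3η / (3s + η)`, turns the exponent into at most `-a η² / (2s + 2η/3) ≤ -log 3`.
-/

open MeasureTheory ProbabilityTheory
open scoped ENNReal Nat Finset

lemma two_mul_three_pow_le_factorial (n : ℕ) : 2 * 3 ^ n ≤ (n + 2)! := by
  induction n with
  | zero => simp [Nat.factorial]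
  | succ n ih =>
    calc 2 * 3 ^ (n + 1) = 3 * (2 * 3 ^ n) := by ring
      _ ≤ (n + 3) * (n + 2)! := Nat.mul_le_mul (by omega) ih
      _ = (n + 3)! := (Nat.factorial_succ _).symm

/-- The exponential series beyond the linear term is dominated by the geometric series
`x ^ 2 / 2 * ∑ (x / 3) ^ n`. -/
lemma Real.exp_le_one_add_add_sq_div {x : ℝ} (hx0 : 0 ≤ x) (hx3 : x < 3) :
    Real.exp x ≤ 1 + x + x ^ 2 / (2 * (1 - x / 3)) := by
  have hsum : Summable (fun n : ℕ => x ^ n / n !) := Real.summable_pow_div_factorial x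
  have hr0 : 0 ≤ x / 3 := by positivity
  have hr1 : x / 3 < 1 := by linarith
  have hterm (n : ℕ) : x ^ (n + 2) / (n + 2)! ≤ x ^ 2 / 2 * (x / 3) ^ n := by
    have h : (2 * 3 ^ n : ℝ) ≤ (n + 2)! := by exact_mod_cast two_mul_three_pow_le_factorial n
    calc x ^ (n + 2) / (n + 2)! ≤ x ^ (n + 2) / (2 * 3 ^ n) := by gcongr
      _ = x ^ 2 / 2 * (x / 3) ^ n := by rw [div_pow]; ring
  have htail : ∑' n : ℕ, x ^ (n + 2) / (n + 2)! ≤ x ^ 2 / (2 * (1 - x / 3)) :=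
    calc ∑' n : ℕ, x ^ (n + 2) / (n + 2)!
        ≤ ∑' n : ℕ, x ^ 2 / 2 * (x / 3) ^ n :=
          Summable.tsum_le_tsum hterm ((summable_nat_add_iff 2).mpr hsum)
            ((summable_geometric_of_lt_one hr0 hr1).mul_left _)
      _ = x ^ 2 / (2 * (1 - x / 3)) := by
          rw [tsum_mul_left, tsum_geometric_of_lt_one hr0 hr1]; field_simp
  calc Real.exp x = ∑' n : ℕ, x ^ n / n ! := by
        rw [Real.exp_eq_exp_ℝ, NormedSpace.exp_eq_tsum_div]
    _ = 1 + x + ∑' n : ℕ, x ^ (n + 2) / (n + 2)! := by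
        rw [← hsum.sum_add_tsum_nat_add 2]; simp [Finset.sum_range_succ]
    _ ≤ 1 + x + x ^ 2 / (2 * (1 - x / 3)) := by linarith

/-- `λ = 3η / (3s + η)` optimises the Chernoff exponent `λ (s + η) - s (exp λ - 1)` after
`exp λ - 1 - λ` is replaced by its bound `λ ^ 2 / (2 (1 - λ / 3))`. -/
lemma bernstein_le_chernoff_exponent {s η : ℝ} (hs : 0 ≤ s) (hη : 0 < η) :
    η ^ 2 / (2 * s + 2 * η / 3) ≤
      3 * η / (3 * s + η) * (s + η) - s * (Real.exp (3 * η / (3 * s + η)) - 1) := by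
  set D := 3 * s + η
  have hD : 0 < D := by positivity
  set L := 3 * η / D with hL
  have hLD : L * D = 3 * η := div_mul_cancel₀ _ hD.ne'
  have hremainder : s * (Real.exp L - 1 - L) ≤ L ^ 2 * D / 6 := by
    rcases hs.eq_or_lt with rfl | hs
    · simp only [zero_mul]; positivity
    have hL3 : L < 3 := by rw [hL, div_lt_iff₀ hD]; linarith
    have hbound := Real.exp_le_one_add_add_sq_div (by positivity) hL3
    have h1 : 2 * (1 - L / 3) = 6 * s / D := by
      field_simp; linarith
    rw [h1] at hbound
    calc s * (Real.exp L - 1 - L) ≤ s * (L ^ 2 / (6 * s / D)) := by gcongr; linarith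
      _ = L ^ 2 * D / 6 := by field_simp
  have hvalue : η ^ 2 / (2 * s + 2 * η / 3) = L * η / 2 := by
    rw [hL]; field_simp; ring
  have hLsq : L ^ 2 * D = 3 * η * L := by rw [← hLD]; ring
  rw [hvalue]
  linarith

/-- Passing to measurable hulls, the sets `A j` need not be measurable. -/
lemma meas_ge_sum_mul_indicator_le_div {Ω ι : Type*} [MeasurableSpace Ω] (μ : Measure Ω)
    (S : Finset ι) (w : ι → ℝ≥0∞) (A : ι → Set Ω) {c : ℝ≥0∞} (hc0 : c ≠ 0) (hc : c ≠ ∞) :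
    μ {ω | c ≤ ∑ j ∈ S, w j * (A j).indicator 1 ω} ≤ (∑ j ∈ S, w j * μ (A j)) / c := by
  set f : Ω → ℝ≥0∞ := fun ω => ∑ j ∈ S, w j * (toMeasurable μ (A j)).indicator 1 ω
  have hmeas (j : ι) : Measurable ((toMeasurable μ (A j)).indicator (1 : Ω → ℝ≥0∞)) :=
    measurable_one.indicator (measurableSet_toMeasurable μ (A j))
  have hf : Measurable f := Finset.measurable_sum _ fun j _ => (hmeas j).const_mul _
  have hsub : {ω | c ≤ ∑ j ∈ S, w j * (A j).indicator 1 ω} ⊆ {ω | c ≤ f ω} := by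
    intro ω (hω : c ≤ _)
    refine hω.trans <| Finset.sum_le_sum fun j _ => mul_le_mul_right ?_ _
    exact Set.indicator_le_indicator_of_subset (subset_toMeasurable μ (A j)) (fun _ => zero_le) ω
  have hint : ∫⁻ ω, f ω ∂μ = ∑ j ∈ S, w j * μ (A j) := by
    rw [lintegral_finsetSum _ fun j _ => (hmeas j).const_mul _]
    refine Finset.sum_congr rfl fun j _ => ?_
    rw [lintegral_const_mul _ (hmeas j),
      lintegral_indicator_one (measurableSet_toMeasurable μ (A j)), measure_toMeasurable]
  calc μ {ω | c ≤ ∑ j ∈ S, w j * (A j).indicator 1 ω} ≤ μ {ω | c ≤ f ω} := measure_mono hsub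
    _ ≤ (∫⁻ ω, f ω ∂μ) / c := meas_ge_le_lintegral_div hf.aemeasurable hc0 hc
    _ = _ := by rw [hint]

lemma one_add_pow_card_eq_sum_pow_card_mul_indicator {Ω ι R : Type*} [Fintype ι]
    [CommSemiring R] (A : ι → Set Ω) (θ : R) (ω : Ω) [DecidablePred (fun i => ω ∈ A i)] :
    (1 + θ) ^ #{i | ω ∈ A i} =
      ∑ T : Finset ι, θ ^ #T * (⋂ i ∈ T, A i).indicator 1 ω := by
  calc (1 + θ) ^ #{i | ω ∈ A i} = ∏ i, (1 + θ * (A i).indicator 1 ω) := by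
        rw [← Finset.prod_const, Finset.prod_filter]
        refine Finset.prod_congr rfl fun i _ => ?_
        by_cases h : ω ∈ A i <;> simp [h]
    _ = ∑ T : Finset ι, θ ^ #T * (⋂ i ∈ T, A i).indicator 1 ω := by
        rw [Finset.prod_one_add, Finset.powerset_univ]
        refine Finset.sum_congr rfl fun T _ => ?_
        rw [Finset.prod_mul_distrib, Finset.prod_const, prod_indicator_const_apply, one_pow]

/-- Expanded over the subsets of successes, `(1 + θ) ^ N` is a combination of indicators of
intersections of the events `{Z i = true}`, whose measures factor by independence. -/
lemma ProbabilityTheory.iIndepFun.meas_ge_one_add_pow_card_le_prod_div {Ω ι : Type*} [Fintype ι]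
    [MeasurableSpace Ω] {μ : Measure Ω} {Z : ι → Ω → Bool} (hZ : iIndepFun Z μ)
    (θ : ℝ≥0∞) {c : ℝ≥0∞} (hc0 : c ≠ 0) (hc : c ≠ ∞) :
    μ {ω | c ≤ (1 + θ) ^ #{i | Z i ω = true}} ≤
      (∏ i, (1 + θ * μ {ω | Z i ω = true})) / c := by
  set A : ι → Set Ω := fun i => {ω | Z i ω = true}
  have hinter (T : Finset ι) : μ (⋂ i ∈ T, A i) = ∏ i ∈ T, μ (A i) :=
    hZ.meas_biInter fun i _ => ⟨{true}, measurableSet_singleton true, rfl⟩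
  have hset : {ω | c ≤ (1 + θ) ^ #{i | Z i ω = true}} =
      {ω | c ≤ ∑ T : Finset ι, θ ^ #T * (⋂ i ∈ T, A i).indicator 1 ω} := by
    ext ω
    simp only [Set.mem_ofPred_eq, ← one_add_pow_card_eq_sum_pow_card_mul_indicator A θ ω, A]
  rw [hset]
  refine (meas_ge_sum_mul_indicator_le_div μ _ _ _ hc0 hc).trans_eq ?_
  rw [Finset.prod_one_add, Finset.powerset_univ]
  congr 1
  refine Finset.sum_congr rfl fun T _ => ?_
  rw [hinter, Finset.prod_mul_distrib, Finset.prod_const]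

lemma ProbabilityTheory.iIndepFun.meas_ge_card_le_exp {Ω ι : Type*} [Fintype ι]
    [MeasurableSpace Ω] {μ : Measure Ω} {Z : ι → Ω → Bool} (hZ : iIndepFun Z μ) {s : ℝ} (hs : 0 ≤ s)
    (hZs : ∀ i, μ {ω | Z i ω = true} ≤ ENNReal.ofReal s) {l : ℝ} (hl : 0 ≤ l) (t : ℝ) :
    μ {ω | t ≤ (#{i | Z i ω = true} : ℝ)} ≤
      ENNReal.ofReal (Real.exp (Fintype.card ι * s * (Real.exp l - 1) - l * t)) := by
  have hθ : 0 ≤ Real.exp l - 1 := by linarith [Real.add_one_le_exp l]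
  set θ := ENNReal.ofReal (Real.exp l - 1)
  have h1θ : 1 + θ = ENNReal.ofReal (Real.exp l) := by
    rw [← ENNReal.ofReal_one, ← ENNReal.ofReal_add zero_le_one hθ, add_sub_cancel]
  have hsub : {ω | t ≤ (#{i | Z i ω = true} : ℝ)} ⊆
      {ω | ENNReal.ofReal (Real.exp (l * t)) ≤ (1 + θ) ^ #{i | Z i ω = true}} := by
    intro ω hω
    rw [Set.mem_ofPred_eq, h1θ, ← ENNReal.ofReal_pow (Real.exp_nonneg l), ← Real.exp_nat_mul]
    exact ENNReal.ofReal_le_ofReal (Real.exp_le_exp.mpr (by rw [mul_comm]; gcongr; exact hω))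
  have hprod : ∏ i, (1 + θ * μ {ω | Z i ω = true}) ≤
      ENNReal.ofReal (Real.exp (Fintype.card ι * s * (Real.exp l - 1))) :=
    calc ∏ i, (1 + θ * μ {ω | Z i ω = true})
        ≤ ∏ _i : ι, ENNReal.ofReal (1 + (Real.exp l - 1) * s) := by
          gcongr with i
          rw [ENNReal.ofReal_add zero_le_one (by positivity), ENNReal.ofReal_one,
            ENNReal.ofReal_mul hθ]
          gcongr
          exact hZs i
      _ ≤ ENNReal.ofReal (Real.exp (∑ _i : ι, (Real.exp l - 1) * s)) := by
          rw [← ENNReal.ofReal_prod_of_nonneg fun _ _ => by positivity]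
          exact ENNReal.ofReal_le_ofReal (Real.prod_one_add_le_exp_sum _ fun _ => by positivity)
      _ = _ := by simp only [Finset.sum_const, Finset.card_univ, nsmul_eq_mul]; ring_nf
  calc μ {ω | t ≤ (#{i | Z i ω = true} : ℝ)}
      ≤ (∏ i, (1 + θ * μ {ω | Z i ω = true})) / ENNReal.ofReal (Real.exp (l * t)) :=
        (measure_mono hsub).trans <| hZ.meas_ge_one_add_pow_card_le_prod_div θ
          (ENNReal.ofReal_pos.mpr (Real.exp_pos _)).ne' ENNReal.ofReal_ne_top
    _ ≤ ENNReal.ofReal (Real.exp (Fintype.card ι * s * (Real.exp l - 1))) /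
          ENNReal.ofReal (Real.exp (l * t)) := by gcongr
    _ = _ := by rw [← ENNReal.ofReal_div_of_pos (Real.exp_pos _), ← Real.exp_sub]

theorem stmt3_general (a : ℕ) (η s : ℝ) (hη : 0 < η) (hs0 : 0 ≤ s)
    (hcond : (a : ℝ) * η ^ 2 ≥ (2 * s + 2 * η / 3) * Real.log 3)
    (t : ℝ) (ht : t = (s + η) * a)
    {Ω : Type*} [MeasurableSpace Ω] (μ : Measure Ω)
    (Z : Fin a → Ω → Bool)
    (hindep : iIndepFun Z μ)
    (hZ : ∀ i, μ {ω | Z i ω = true} ≤ ENNReal.ofReal s) :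
    μ {ω | t ≤ ((Finset.univ.filter fun i => Z i ω = true).card : ℝ)} ≤ 1 / 3 := by
  set L := 3 * η / (3 * s + η)
  have hexponent : a * s * (Real.exp L - 1) - L * t ≤ -Real.log 3 := by
    have hbern := bernstein_le_chernoff_exponent hs0 hη
    have hlog : Real.log 3 ≤ a * (η ^ 2 / (2 * s + 2 * η / 3)) := by
      rw [mul_div_assoc', le_div_iff₀ (by positivity)]; linarith
    have hscaled := mul_le_mul_of_nonneg_left hbern (Nat.cast_nonneg a : (0 : ℝ) ≤ a)
    rw [ht]
    linarith
  calc μ {ω | t ≤ ((Finset.univ.filter fun i => Z i ω = true).card : ℝ)}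
      ≤ ENNReal.ofReal (Real.exp (a * s * (Real.exp L - 1) - L * t)) := by
        simpa using hindep.meas_ge_card_le_exp hs0 hZ (by positivity) t
    _ ≤ ENNReal.ofReal (Real.exp (-Real.log 3)) := by gcongr
    _ = 1 / 3 := by
        rw [Real.exp_neg, Real.exp_log three_pos, ENNReal.ofReal_inv_of_pos three_pos]
        simp

/-- Probabilistic core of Lemma lm-bd-1 (second bullet): a Chernoff/Bernstein upper
tail bound shows the match count reaches the threshold with probability at most `1/3`. -/
theorem stmt3 (a : ℕ) (hapos : 0 < a) (η s : ℝ) (hη : 0 < η) (hs0 : 0 ≤ s) (hs1 : s < 1)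
    (hcond : (a : ℝ) * η ^ 2 ≥ (2 * s + 2 * η / 3) * Real.log 3)
    (t : ℝ) (ht : t = (s + η) * a)
    {Ω : Type*} [MeasurableSpace Ω] (μ : Measure Ω) [IsProbabilityMeasure μ]
    (Z : Fin a → Ω → Bool)
    (hindep : iIndepFun Z μ)
    (hZ : ∀ i, μ {ω | Z i ω = true} ≤ ENNReal.ofReal s) :
    μ {ω | t ≤ ((Finset.univ.filter fun i => Z i ω = true).card : ℝ)} ≤ 1 / 3 :=
  stmt3_general a η s hη hs0 hcond t ht μ Z hindep hZ
end

section
/- Work in ℝ^d = EuclideanSpace ℝ (Fin d) with d ≥ 1. Let ε′ > 0, r > 0 and set ρ := r/(1+ε′) and t := √(r² − ρ²). Let Q ⊆ ℝ^d be a finite nonempty set with Q ⊆ closedBall(c, r), and assume every closed ball containing Q has radius at least ρ (i.e., for all z ∈ ℝ^d and s ≥ 0 with Q ⊆ closedBall(z, s) one has s ≥ ρ). Let c′ ∈ ℝ^d with c′ ≠ c and ‖c′ − c‖ ≥ t, and let q := c + (t/‖c′ − c‖) • (c′ − c). Then there exists p ∈ Q such that ⟪p − c′, c − c′⟫ ≥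 0 (p lies in the closed half-space bounded by the hyperplane through c′ orthogonal to c − c′ that contains c) and ‖p − q‖ ≥ ρ. -/
open scoped RealInnerProductSpace

set_option maxHeartbeats 1000000 in
/-- Claim 11 in the analysis of the AMEB query algorithm: if `closedBall c r` is a
`(1+ε′)`-approximate MEB of `Q`, then there is a point of `Q` in the half-space through
`c′` (orthogonal to `c − c′`, containing `c`) at distance at least `ρ = r/(1+ε′)`
from the point `q` on the ray from `c` towards `c′` at distance `t = √(r² − ρ²)`. -/
theorem stmt6 (d : ℕ) (hd : 1 ≤ d) (ε' r : ℝ) (hε' : 0 < ε') (hr : 0 < r)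
    (ρ t : ℝ) (hρ : ρ = r / (1 + ε')) (ht : t = Real.sqrt (r ^ 2 - ρ ^ 2))
    (Q : Finset (EuclideanSpace ℝ (Fin d))) (hQne : Q.Nonempty)
    (c : EuclideanSpace ℝ (Fin d))
    (hQ : ∀ p ∈ Q, ‖p - c‖ ≤ r)
    (hMEB : ∀ (z : EuclideanSpace ℝ (Fin d)) (s : ℝ), 0 ≤ s →
      (∀ p ∈ Q, ‖p - z‖ ≤ s) → ρ ≤ s)
    (c' : EuclideanSpace ℝ (Fin d)) (hc' : c' ≠ c) (hdist : ‖c' - c‖ ≥ t)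
    (q : EuclideanSpace ℝ (Fin d)) (hq : q = c + (t / ‖c' - c‖) • (c' - c)) :
    ∃ p ∈ Q, ⟪p - c', c - c'⟫ ≥ 0 ∧ ‖p - q‖ ≥ ρ := by
  by_contra hcon
  push_neg at hcon
  have hρpos : 0 < ρ := by rw [hρ]; positivity
  have hρr : ρ < r := by
    rw [hρ]
    exact div_lt_self hr (by linarith)
  have ht2 : t ^ 2 = r ^ 2 - ρ ^ 2 := by
    rw [ht]; exact Real.sq_sqrt (by nlinarith)
  have htpos : 0 < t := by
    rw [ht]; exact Real.sqrt_pos.2 (by nlinarith)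
  have hn : 0 < ‖c' - c‖ := norm_pos_iff.2 (sub_ne_zero.2 hc')
  have key : ∀ p ∈ Q, ‖p - q‖ < ρ := by
    intro p hp
    rcases le_or_gt 0 ⟪p - c', c - c'⟫ with h | h
    · exact hcon p hp h
    · have hrw : ⟪p - c', c - c'⟫ = -⟪p - c, c' - c⟫ + ‖c' - c‖ ^ 2 := by
        have h1 : p - c' = (p - c) - (c' - c) := by abel
        have h2 : c - c' = -(c' - c) := by abel
        rw [h1, h2, inner_sub_left, inner_neg_right, inner_neg_right,
          real_inner_self_eq_norm_sq]
        ring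
      have hip : ‖c' - c‖ ^ 2 < ⟪p - c, c' - c⟫ := by
        rw [hrw] at h; linarith
      have hsub : p - q = (p - c) - (t / ‖c' - c‖) • (c' - c) := by
        rw [hq]; abel
      have hsq : ‖p - q‖ ^ 2 =
          ‖p - c‖ ^ 2 - 2 * (t / ‖c' - c‖ * ⟪p - c, c' - c⟫) + t ^ 2 := by
        rw [hsub, @norm_sub_sq_real, real_inner_smul_right, norm_smul,
          Real.norm_eq_abs, abs_of_pos (div_pos htpos hn)]
        field_simp
      have h3 : t * ‖c' - c‖ < t / ‖c' - c‖ * ⟪p - c, c' - c⟫ := by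
        rw [div_mul_eq_mul_div, lt_div_iff₀ hn]
        nlinarith
      have hpr : ‖p - c‖ ≤ r := hQ p hp
      have hpq2 : ‖p - q‖ ^ 2 < ρ ^ 2 := by nlinarith [mul_le_mul hpr hpr (norm_nonneg (p - c)) hr.le, mul_le_mul_of_nonneg_left hdist htpos.le]
      exact lt_of_pow_lt_pow_left₀ 2 hρpos.le hpq2
  obtain ⟨p0, hp0⟩ := id hQne
  set s := Q.sup' hQne (fun p => ‖p - q‖) with hs
  have hs0 : 0 ≤ s := le_trans (norm_nonneg _) (Finset.le_sup' (fun p => ‖p - q‖) hp0)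
  have hsρ : s < ρ := (Finset.sup'_lt_iff hQne).2 (fun p hp => key p hp)
  have := hMEB q s hs0 (fun p hp => Finset.le_sup' (fun p => ‖p - q‖) hp)
  linarith
end

section
/- Work in ℝ^d = EuclideanSpace ℝ (Fin d) with d ≥ 1. Let 0 < ε < 1, set ε₀ := ε²/1600, and let ε′ > 0 satisfy (1+ε′)⁻² ≥ 1 − ε²/100 and (1+ε′)⁻¹ ≥ 1 − ε₀. Let Q ⊆ ℝ^d be finite and nonempty, let c, c′ ∈ ℝ^d and r > 0, r′ > 0 be such that: Q ⊆ closedBall(c, r); every closed ball containing Q has radius at least r/(1+ε′); Q ⊆ closedBall(c′, r′); and r′ ≤ (1+ε₀)·r. Then ‖c − c′‖ ≤ (ε/10)·r. -/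
set_option maxHeartbeats 1000000


/-- Center stability in Case (4) of the AMEB correctness proof:
if `closedBall c r` is a `(1+ε′)`-approximate MEB of `Q` and `closedBall c′ r′`
encloses `Q` with `r′ ≤ (1+ε₀) r`, then `‖c − c′‖ ≤ (ε/10) r`. -/
theorem stmt7 (d : ℕ) (hd : 1 ≤ d) (ε : ℝ) (hε0 : 0 < ε) (hε1 : ε < 1)
    (ε₀ : ℝ) (hε₀ : ε₀ = ε ^ 2 / 1600)
    (ε' : ℝ) (hε' : 0 < ε')
    (hε'1 : (1 + ε')⁻¹ ^ 2 ≥ 1 - ε ^ 2 / 100)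
    (hε'2 : (1 + ε')⁻¹ ≥ 1 - ε₀)
    (Q : Finset (EuclideanSpace ℝ (Fin d))) (hQne : Q.Nonempty)
    (c c' : EuclideanSpace ℝ (Fin d)) (r r' : ℝ) (hr : 0 < r) (hr' : 0 < r')
    (hQc : ∀ p ∈ Q, ‖p - c‖ ≤ r)
    (hMEB : ∀ (z : EuclideanSpace ℝ (Fin d)) (s : ℝ), 0 ≤ s →
      (∀ p ∈ Q, ‖p - z‖ ≤ s) → r / (1 + ε') ≤ s)
    (hQc' : ∀ p ∈ Q, ‖p - c'‖ ≤ r')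
    (hr'r : r' ≤ (1 + ε₀) * r) :
    ‖c - c'‖ ≤ (ε / 10) * r := by
  set δ : ℝ := ‖c - c'‖ with hδ
  have hδ0 : 0 ≤ δ := norm_nonneg _
  set m : EuclideanSpace ℝ (Fin d) := (2:ℝ)⁻¹ • (c + c') with hm
  -- key pointwise bound via parallelogram law
  have key : ∀ p ∈ Q, ‖p - m‖ ^ 2 ≤ (2 * r ^ 2 + 2 * r' ^ 2 - δ ^ 2) / 4 := by
    intro p hp
    have hpc := hQc p hp
    have hpc' := hQc' p hp
    have hrw : p - m = (2:ℝ)⁻¹ • ((p - c) + (p - c')) := by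
      rw [hm]; module
    have hpar := parallelogram_law_with_norm ℝ (p - c) (p - c')
    have hsub : (p - c) - (p - c') = c' - c := by abel
    have hnrev : ‖c' - c‖ = δ := by rw [hδ, norm_sub_rev]
    have h1 : ‖p - m‖ = (2:ℝ)⁻¹ * ‖(p - c) + (p - c')‖ := by
      rw [hrw, norm_smul]; simp
    have h2 : ‖(p - c) + (p - c')‖ * ‖(p - c) + (p - c')‖
        = 2 * (‖p - c‖ * ‖p - c‖ + ‖p - c'‖ * ‖p - c'‖) - δ * δ := by
      rw [hsub, hnrev] at hpar; linarith
    have hnc : 0 ≤ ‖p - c‖ := norm_nonneg _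
    have hnc' : 0 ≤ ‖p - c'‖ := norm_nonneg _
    have h3 : ‖p - m‖ ^ 2 = (‖(p - c) + (p - c')‖ * ‖(p - c) + (p - c')‖) / 4 := by
      rw [h1]; ring
    rw [h3, h2]
    nlinarith [sq_nonneg (‖p - c‖ - r), sq_nonneg (‖p - c'‖ - r')]
  obtain ⟨p₀, hp₀⟩ := hQne
  have hK : 0 ≤ (2 * r ^ 2 + 2 * r' ^ 2 - δ ^ 2) / 4 := by
    have := key p₀ hp₀
    nlinarith [sq_nonneg ‖p₀ - m‖]
  set s : ℝ := Real.sqrt ((2 * r ^ 2 + 2 * r' ^ 2 - δ ^ 2) / 4) with hs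
  have hs0 : 0 ≤ s := Real.sqrt_nonneg _
  have hssq : s ^ 2 = (2 * r ^ 2 + 2 * r' ^ 2 - δ ^ 2) / 4 := Real.sq_sqrt hK
  have henc : ∀ p ∈ Q, ‖p - m‖ ≤ s := by
    intro p hp
    have h := key p hp
    nlinarith [norm_nonneg (p - m)]
  have hle := hMEB m s hs0 henc
  -- lower bound r/(1+ε') ≥ (1-ε₀) r
  have hε₀pos : 0 < 1 - ε₀ := by rw [hε₀]; nlinarith
  have hlb : (1 - ε₀) * r ≤ r / (1 + ε') := by
    rw [div_eq_mul_inv]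
    calc (1 - ε₀) * r = r * (1 - ε₀) := by ring
    _ ≤ r * (1 + ε')⁻¹ := by
        exact mul_le_mul_of_nonneg_left hε'2 hr.le
  have h3 : (1 - ε₀) * r ≤ s := le_trans hlb hle
  have h4 : ((1 - ε₀) * r) ^ 2 ≤ s ^ 2 := by
    apply pow_le_pow_left₀ (by positivity) h3
  rw [hssq] at h4
  -- combine everything
  have hr'2 : r' ^ 2 ≤ ((1 + ε₀) * r) ^ 2 := by
    apply pow_le_pow_left₀ hr'.le hr'r
  have hδsq : δ ^ 2 ≤ (ε / 10 * r) ^ 2 := by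
    rw [hε₀] at h4 hr'2
    nlinarith [sq_nonneg (ε * r), sq_nonneg ε, sq_nonneg r, mul_pos hε0 hr,
      sq_nonneg (ε^2 * r)]
  nlinarith [mul_pos hε0 hr]
end

section
/- Work in ℝ^d = EuclideanSpace ℝ (Fin d) with d ≥ 1. Let 0 < ε < 1, set ε₀ := ε²/1600, let 0 < ε_A ≤ ε/18, and let 0 < ε′ ≤ ε/3 satisfy (1+ε′)⁻² ≥ 1 − ε²/100 and (1+ε′)⁻¹ ≥ 1 − ε₀. Let Q ⊆ ℝ^d be finite and nonempty, c ∈ ℝ^d, r > 0 with Q ⊆ closedBall(c, r) and with every closed ball containing Q having radius at least r/(1+ε′). Let p, p_i ∈ ℝ^d satisfy ‖p_i − c‖ ≥ (1−ε_A)·‖p − c‖. Let c′ ∈ ℝ^d and r′ > 0 be such that Q ∪ {p_i} ⊆ closedBall(c′, r′) and r′ ≤ (1+ε₀)·r. Then ‖p − c′‖ ≤ (1 + ε/3)·r′. -/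
private lemma stmt8_aux1 (ε ε₀ r r' δ : ℝ) (hε0 : 0 < ε) (hε1 : ε < 1)
    (hε₀ : ε₀ = ε ^ 2 / 1600) (hr : 0 < r) (hr' : 0 < r') (hδ0 : 0 ≤ δ)
    (hδsq : δ ^ 2 ≤ 12 * ε₀ * r ^ 2) (hrr' : (1 - ε₀) * r ≤ r') :
    δ ≤ ε * r' / 10 := by
  have hε₀pos : 0 < ε₀ := by rw [hε₀]; positivity
  have hε₀lt : ε₀ < 1 / 1600 := by rw [hε₀]; nlinarith
  have hrr'sq : ((1 - ε₀) * r) ^ 2 ≤ r' ^ 2 :=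
    pow_le_pow_left₀ (by nlinarith) hrr' 2
  have h2 := mul_le_mul_of_nonneg_left hrr'sq (sq_nonneg ε)
  have h1 : δ ^ 2 ≤ (ε * r' / 10) ^ 2 := by
    rw [hε₀] at hδsq
    have h6 : (3:ℝ) / 4 ≤ (1 - ε ^ 2 / 1600) ^ 2 := by nlinarith
    have h5 : (0:ℝ) ≤ ε ^ 2 * r ^ 2 * ((1 - ε ^ 2 / 1600) ^ 2 - 3 / 4) :=
      mul_nonneg (by positivity) (by linarith)
    rw [hε₀] at h2
    nlinarith [h2, hδsq, h5]
  have h3 := Real.sqrt_le_sqrt h1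
  rwa [Real.sqrt_sq hδ0, Real.sqrt_sq (by positivity)] at h3

private lemma stmt8_aux2 (ε ε_A r' δ a b : ℝ) (hε0 : 0 < ε) (hε1 : ε < 1)
    (hεA0 : 0 < ε_A) (hεA : ε_A ≤ ε / 18) (hr' : 0 < r') (hδ0 : 0 ≤ δ)
    (hδle : δ ≤ ε * r' / 10) (ha0 : 0 ≤ a) (ha : (1 - ε_A) * a ≤ r' + δ)
    (hb : b ≤ a + δ) : b ≤ (1 + ε / 3) * r' := by
  have hεA1 : ε_A < 1 / 18 := by linarith
  have h1 : a ≤ (18 / 17) * (r' + δ) := by nlinarith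
  nlinarith [mul_pos hε0 hr', mul_nonneg hε0.le hδ0]


/-- Per-iteration lemma (conclusion of Case (4) in the AMEB correctness proof):
every in-range point `p` lies in the enlarged ball `B_i(1+ε/3)`. -/
theorem stmt8 (d : ℕ) (hd : 1 ≤ d) (ε : ℝ) (hε0 : 0 < ε) (hε1 : ε < 1)
    (ε₀ : ℝ) (hε₀ : ε₀ = ε ^ 2 / 1600)
    (ε_A : ℝ) (hεA0 : 0 < ε_A) (hεA : ε_A ≤ ε / 18)
    (ε' : ℝ) (hε'0 : 0 < ε') (hε'ε : ε' ≤ ε / 3)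
    (hε'1 : (1 + ε')⁻¹ ^ 2 ≥ 1 - ε ^ 2 / 100)
    (hε'2 : (1 + ε')⁻¹ ≥ 1 - ε₀)
    (Q : Finset (EuclideanSpace ℝ (Fin d))) (hQne : Q.Nonempty)
    (c : EuclideanSpace ℝ (Fin d)) (r : ℝ) (hr : 0 < r)
    (hQc : ∀ x ∈ Q, ‖x - c‖ ≤ r)
    (hMEB : ∀ (z : EuclideanSpace ℝ (Fin d)) (s : ℝ), 0 ≤ s →
      (∀ x ∈ Q, ‖x - z‖ ≤ s) → r / (1 + ε') ≤ s)
    (p p_i : EuclideanSpace ℝ (Fin d))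
    (hfar : ‖p_i - c‖ ≥ (1 - ε_A) * ‖p - c‖)
    (c' : EuclideanSpace ℝ (Fin d)) (r' : ℝ) (hr' : 0 < r')
    (hQc' : ∀ x ∈ Q, ‖x - c'‖ ≤ r') (hpic' : ‖p_i - c'‖ ≤ r')
    (hr'r : r' ≤ (1 + ε₀) * r) :
    ‖p - c'‖ ≤ (1 + ε / 3) * r' := by
  have hδ0 : (0:ℝ) ≤ ‖c - c'‖ := norm_nonneg _
  set δ : ℝ := ‖c - c'‖ with hδdef
  have hε₀pos : 0 < ε₀ := by rw [hε₀]; positivity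
  have hε₀lt : ε₀ < 1/1600 := by rw [hε₀]; nlinarith
  have h1ε' : (0:ℝ) < 1 + ε' := by linarith
  -- r ≤ r'/(1-ε₀) in product form
  have hrr' : (1 - ε₀) * r ≤ r' := by
    have h := hMEB c' r' hr'.le hQc'
    have h2 : (1 - ε₀) * r ≤ r / (1 + ε') := by
      rw [div_eq_mul_inv]
      have := mul_le_mul_of_nonneg_left hε'2 hr.le
      linarith [this]
    linarith
  -- parallelogram / midpoint bound on δ
  have key : δ^2 ≤ 2*r^2 + 2*r'^2 - 4 * (r / (1+ε'))^2 := by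
    set m : EuclideanSpace ℝ (Fin d) := (2:ℝ)⁻¹ • (c + c') with hm
    set A : ℝ := (2*r^2 + 2*r'^2 - δ^2)/4 with hA
    have hxmsq : ∀ x ∈ Q, ‖x - m‖^2 ≤ A := by
      intro x hx
      have hpar := parallelogram_law_with_norm ℝ (x - c) (x - c')
      have hsum : (x - c) + (x - c') = (2:ℝ) • (x - m) := by
        rw [hm]; module
      have hdiff : (x - c) - (x - c') = c' - c := by abel
      rw [hsum, hdiff, norm_smul] at hpar
      have hnn : ‖c' - c‖ = δ := by rw [hδdef, norm_sub_rev]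
      have h1 : ‖x - c‖ ≤ r := hQc x hx
      have h2 : ‖x - c'‖ ≤ r' := hQc' x hx
      have h3 : (0:ℝ) ≤ ‖x - c‖ := norm_nonneg _
      have h4 : (0:ℝ) ≤ ‖x - c'‖ := norm_nonneg _
      simp only [Real.norm_ofNat] at hpar
      rw [hnn] at hpar
      nlinarith [hpar]
    obtain ⟨x₀, hx₀⟩ := hQne
    have hA0 : 0 ≤ A := le_trans (by positivity) (hxmsq x₀ hx₀)
    have hball : ∀ x ∈ Q, ‖x - m‖ ≤ Real.sqrt A := by
      intro x hx
      have := hxmsq x hx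
      have : ‖x - m‖ = Real.sqrt (‖x - m‖^2) := by
        rw [Real.sqrt_sq (norm_nonneg _)]
      rw [this]
      exact Real.sqrt_le_sqrt (hxmsq x hx)
    have hle := hMEB m (Real.sqrt A) (Real.sqrt_nonneg A) hball
    have hsq : (r / (1+ε'))^2 ≤ A := by
      have h0 : 0 ≤ r / (1+ε') := by positivity
      calc (r / (1+ε'))^2 ≤ (Real.sqrt A)^2 := by
            apply pow_le_pow_left₀ h0 hle
        _ = A := Real.sq_sqrt hA0
    rw [hA] at hsq
    linarith
  -- numeric bound on δ
  have hinv : (r / (1+ε'))^2 ≥ ((1-ε₀)*r)^2 := by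
    rw [div_eq_mul_inv]
    have h1 : (0:ℝ) ≤ 1 - ε₀ := by linarith
    have h2 : (1-ε₀)*r ≤ r * (1+ε')⁻¹ := by
      have := mul_le_mul_of_nonneg_left hε'2 hr.le
      linarith
    have h3 : (0:ℝ) ≤ (1-ε₀)*r := by positivity
    exact pow_le_pow_left₀ h3 h2 2
  have hr'sq : r'^2 ≤ ((1+ε₀)*r)^2 := pow_le_pow_left₀ hr'.le hr'r 2
  have hδsq : δ^2 ≤ 12 * ε₀ * r^2 := by
    have step : δ^2 ≤ 2*r^2 + 2*((1+ε₀)*r)^2 - 4*((1-ε₀)*r)^2 := by linarith [key, hinv, hr'sq]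
    have hexp : 2*r^2 + 2*((1+ε₀)*r)^2 - 4*((1-ε₀)*r)^2 = 12*ε₀*r^2 - 2*(ε₀^2*r^2) := by ring
    have h0 : (0:ℝ) ≤ ε₀^2 * r^2 := by positivity
    linarith [step, hexp.le, hexp.ge, h0]
  have hδle : δ ≤ ε * r' / 10 := stmt8_aux1 ε ε₀ r r' δ hε0 hε1 hε₀ hr hr' hδ0 hδsq hrr'
  -- triangle inequalities
  have htri1 : ‖p - c'‖ ≤ ‖p - c‖ + δ := by
    calc ‖p - c'‖ = ‖(p - c) + (c - c')‖ := by rw [sub_add_sub_cancel]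
      _ ≤ ‖p - c‖ + ‖c - c'‖ := norm_add_le _ _
  have htri2 : ‖p_i - c‖ ≤ r' + δ := by
    calc ‖p_i - c‖ = ‖(p_i - c') + (c' - c)‖ := by rw [sub_add_sub_cancel]
      _ ≤ ‖p_i - c'‖ + ‖c' - c‖ := norm_add_le _ _
      _ ≤ r' + δ := by rw [norm_sub_rev c' c]; linarith
  have hpc : (1 - ε_A) * ‖p - c‖ ≤ r' + δ := le_trans hfar htri2
  exact stmt8_aux2 ε ε_A r' δ ‖p - c‖ ‖p - c'‖ hε0 hε1 hεA0 hεA hr' hδ0 hδle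
    (norm_nonneg _) hpc htri1
end

section
/- Work in ℝ^d = EuclideanSpace ℝ (Fin d) with d ≥ 1. Let 0 < ε_A ≤ 1/2 and ε₀ > 0. Let P ⊆ ℝ^d be a finite set, o ∈ ℝ^d, r_B > 0, and let p_a, p_b ∈ ℝ^d with r₀ := ‖p_a − p_b‖/2. Assume that for every p′ ∈ P with ‖p′ − o‖ ≤ r_B one has (1−ε_A)·‖p′ − p_a‖ ≤ ‖p_a − p_b‖. Let c_w ∈ ℝ^d and r_w > 0 satisfy ‖p_a − c_w‖ ≤ r_w and r_w ≥ (4/ε₀)·r₀. Then every p′ ∈ P with ‖p′ − o‖ ≤ r_B satisfies ‖p′ − c_w‖ ≤ (1+ε₀)·r_w. -/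
/-- Containment claim from Case (5) of the AMEB correctness proof: after the radius
has grown to `r_w ≥ 4 r₀ / ε₀`, the enlarged ball `B_w(1+ε₀)` contains all in-range
points. -/
theorem stmt10 (d : ℕ) (hd : 1 ≤ d)
    (ε_A : ℝ) (hεA0 : 0 < ε_A) (hεA : ε_A ≤ 1 / 2)
    (ε₀ : ℝ) (hε₀ : 0 < ε₀)
    (P : Finset (EuclideanSpace ℝ (Fin d)))
    (o : EuclideanSpace ℝ (Fin d)) (r_B : ℝ) (hrB : 0 < r_B)
    (p_a p_b : EuclideanSpace ℝ (Fin d))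
    (r₀ : ℝ) (hr₀ : r₀ = ‖p_a - p_b‖ / 2)
    (hinit : ∀ p' ∈ P, ‖p' - o‖ ≤ r_B → (1 - ε_A) * ‖p' - p_a‖ ≤ ‖p_a - p_b‖)
    (c_w : EuclideanSpace ℝ (Fin d)) (r_w : ℝ) (hrw : 0 < r_w)
    (hpa : ‖p_a - c_w‖ ≤ r_w) (hgrow : r_w ≥ (4 / ε₀) * r₀) :
    ∀ p' ∈ P, ‖p' - o‖ ≤ r_B → ‖p' - c_w‖ ≤ (1 + ε₀) * r_w := by
  intro p' hp hprB
  have h1 := hinit p' hp hprB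
  have hpos : (0:ℝ) ≤ ‖p' - p_a‖ := norm_nonneg _
  have h2 : ‖p' - p_a‖ ≤ 4 * r₀ := by
    rw [hr₀]
    nlinarith [h1]
  have h3 : 4 * r₀ ≤ ε₀ * r_w := by
    have h := mul_le_mul_of_nonneg_left hgrow hε₀.le
    have he : ε₀ * (4 / ε₀ * r₀) = 4 * r₀ := by field_simp
    linarith [h, he.ge.trans h]
  have htri : ‖p' - c_w‖ ≤ ‖p' - p_a‖ + ‖p_a - c_w‖ := norm_sub_le_norm_sub_add_norm_sub _ _ _
  nlinarith
end

section
/- Work in ℝ^d = EuclideanSpace ℝ (Fin d) with d ≥ 1. Let 0 < λ < 1, let P ⊆ ℝ^d be finite, let o, q ∈ ℝ^d, r_B > 0 and 0 < d_min ≤ r_B. Assume there exists x₀ ∈ P with ‖x₀ − o‖ ≤ r_B and ‖q − x₀‖ ≥ d_min. Let S ⊆ P and p ∈ S with ‖p − o‖ ≤ r_B, and assume: (diameter bound) ‖x − y‖ ≤ λ·d_min for all x, y ∈ S; (isolation) ‖p − p′‖ ≥ 4·(‖p − q‖ + (2+2λ)·r_B) for every p′ ∈ P \ S. Then: (1) every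 x ∈ P with ‖x − o‖ ≤ (1+λ)·r_B belongs to S; (2) every p″ ∈ S satisfies ‖p″ − o‖ ≤ (1+λ)·r_B and (1−λ)·‖q − x‖ ≤ ‖q − p″‖ for every x ∈ P with ‖x − o‖ ≤ r_B (i.e., every point of S is certified as a (λ, λ)-approximate in-range farthest point of q in P ∩ closedBall(o, r_B)); and (3) every p_N ∈ P satisfying ‖q − p_N‖ ≤ (1+λ)·‖q − x‖ for all x ∈ P (a (1+λ)-approximate nearest neighbor of q in P) belongs to S. -/
/-- Geometric core of Case 1 in the proof of Lemma lm-multi: a small-diameter,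
isolated cluster `S` containing an in-range point captures all (slightly enlarged)
in-range points, every point of `S` is a `(λ, λ)`-AIFP, and every `(1+λ)`-approximate
nearest neighbor of `q` lies in `S`. -/
theorem stmt11 (d : ℕ) (hd : 1 ≤ d) (lam : ℝ) (hlam0 : 0 < lam) (hlam1 : lam < 1)
    (P S : Finset (EuclideanSpace ℝ (Fin d))) (hSP : S ⊆ P)
    (o q : EuclideanSpace ℝ (Fin d)) (r_B d_min : ℝ)
    (hdmin0 : 0 < d_min) (hdminrB : d_min ≤ r_B)
    (x₀ : EuclideanSpace ℝ (Fin d)) (hx₀P : x₀ ∈ P)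
    (hx₀B : ‖x₀ - o‖ ≤ r_B) (hx₀q : ‖q - x₀‖ ≥ d_min)
    (p : EuclideanSpace ℝ (Fin d)) (hpS : p ∈ S) (hpB : ‖p - o‖ ≤ r_B)
    (hdiam : ∀ x ∈ S, ∀ y ∈ S, ‖x - y‖ ≤ lam * d_min)
    (hiso : ∀ p' ∈ P, p' ∉ S → ‖p - p'‖ ≥ 4 * (‖p - q‖ + (2 + 2 * lam) * r_B)) :
    (∀ x ∈ P, ‖x - o‖ ≤ (1 + lam) * r_B → x ∈ S) ∧
    (∀ p'' ∈ S, ‖p'' - o‖ ≤ (1 + lam) * r_B ∧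
      ∀ x ∈ P, ‖x - o‖ ≤ r_B → (1 - lam) * ‖q - x‖ ≤ ‖q - p''‖) ∧
    (∀ p_N ∈ P, (∀ x ∈ P, ‖q - p_N‖ ≤ (1 + lam) * ‖q - x‖) → p_N ∈ S) := by
  have hrB : 0 < r_B := lt_of_lt_of_le hdmin0 hdminrB
  have tri : ∀ a b c : EuclideanSpace ℝ (Fin d), ‖a - c‖ ≤ ‖a - b‖ + ‖b - c‖ := by
    intro a b c
    have h : a - c = (a - b) + (b - c) := by abel
    rw [h]; exact norm_add_le _ _
  have h1 : ∀ x ∈ P, ‖x - o‖ ≤ (1 + lam) * r_B → x ∈ S := by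
    intro x hxP hxB
    by_contra hxS
    have hi := hiso x hxP hxS
    have hpx : ‖p - x‖ ≤ ‖p - o‖ + ‖x - o‖ := by
      calc ‖p - x‖ ≤ ‖p - o‖ + ‖o - x‖ := tri _ _ _
        _ = ‖p - o‖ + ‖x - o‖ := by rw [norm_sub_rev o x]
    nlinarith [norm_nonneg (p - q)]
  refine ⟨h1, ?_, ?_⟩
  · intro p'' hp''
    have hx₀S : x₀ ∈ S := h1 x₀ hx₀P (by nlinarith)
    have hdp : ‖p'' - p‖ ≤ lam * d_min := hdiam p'' hp'' p hpS
    constructor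
    · have := tri p'' p o
      nlinarith
    · intro x hxP hxB
      have hxS : x ∈ S := h1 x hxP (by nlinarith)
      have h1' : ‖q - x₀‖ ≤ ‖q - p''‖ + ‖p'' - x₀‖ := tri _ _ _
      have h2' : ‖q - x‖ ≤ ‖q - p''‖ + ‖p'' - x‖ := tri _ _ _
      have h3' : ‖p'' - x₀‖ ≤ lam * d_min := hdiam p'' hp'' x₀ hx₀S
      have h4' : ‖p'' - x‖ ≤ lam * d_min := hdiam p'' hp'' x hxS
      nlinarith [norm_nonneg (q - p'')]
  · intro p_N hP hann
    by_contra hN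
    have hi := hiso p_N hP hN
    have ha := hann p (hSP hpS)
    have ht : ‖p - p_N‖ ≤ ‖p - q‖ + ‖q - p_N‖ := tri _ _ _
    have hr : ‖q - p‖ = ‖p - q‖ := norm_sub_rev _ _
    nlinarith [norm_nonneg (p - q)]
end

section
/- Work in ℝ^d = EuclideanSpace ℝ (Fin d) with d ≥ 1. Let 0 < λ < 1, let P ⊆ ℝ^d be finite, let o, q ∈ ℝ^d, r_B > 0 and 0 < d_min ≤ r_B, and assume there exists x₀ ∈ P with ‖x₀ − o‖ ≤ r_B and ‖q − x₀‖ ≥ d_min. Let R ⊆ ℝ^d be a finite set of representatives such that for every x ∈ P with ‖x − o‖ ≤ r_B there exists y ∈ R with ‖x − y‖ ≤ λ·d_min. Suppose p ∈ ℝ^d satisfies ‖p − o‖ ≤ (1 + λ/6)·(1+λ)·r_B and (1 − λ/6)·‖q − y‖ ≤ ‖q − p‖ for every y ∈ R with ‖y − o‖ ≤ (1+λ)·r_B (i.e., p is certified as a (λ/6, λ/6)-approximate in-range farthest point of q in R ∩ closedBall(o, (1+λ)·r_B)). Then ‖p − o‖ ≤ (1+2λ)·r_B and (1−2λ)·‖q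 − x‖ ≤ ‖q − p‖ for every x ∈ P with ‖x − o‖ ≤ r_B; that is, p is certified as a (2λ, 2λ)-approximate in-range farthest point of q in P ∩ closedBall(o, r_B). -/
/-- Geometric core of Case 2 in the proof of Lemma lm-multi: an approximate farthest
representative (a `(λ/6, λ/6)`-AIFP among the representatives `R` in the slightly
enlarged ball) is a `(2λ, 2λ)`-AIFP for the original point set `P`. -/
theorem stmt12 (d : ℕ) (hd : 1 ≤ d) (lam : ℝ) (hlam0 : 0 < lam) (hlam1 : lam < 1)
    (P : Finset (EuclideanSpace ℝ (Fin d)))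
    (o q : EuclideanSpace ℝ (Fin d)) (r_B d_min : ℝ)
    (hdmin0 : 0 < d_min) (hdminrB : d_min ≤ r_B)
    (x₀ : EuclideanSpace ℝ (Fin d)) (hx₀P : x₀ ∈ P)
    (hx₀B : ‖x₀ - o‖ ≤ r_B) (hx₀q : ‖q - x₀‖ ≥ d_min)
    (R : Finset (EuclideanSpace ℝ (Fin d)))
    (hrep : ∀ x ∈ P, ‖x - o‖ ≤ r_B → ∃ y ∈ R, ‖x - y‖ ≤ lam * d_min)
    (p : EuclideanSpace ℝ (Fin d))
    (hpo : ‖p - o‖ ≤ (1 + lam / 6) * ((1 + lam) * r_B))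
    (hpfar : ∀ y ∈ R, ‖y - o‖ ≤ (1 + lam) * r_B → (1 - lam / 6) * ‖q - y‖ ≤ ‖q - p‖) :
    ‖p - o‖ ≤ (1 + 2 * lam) * r_B ∧
    ∀ x ∈ P, ‖x - o‖ ≤ r_B → (1 - 2 * lam) * ‖q - x‖ ≤ ‖q - p‖ := by
  have hrB : 0 < r_B := lt_of_lt_of_le hdmin0 hdminrB
  -- key: a lower bound on ‖q - p‖ from x₀'s representative
  have key : ∀ x ∈ P, ‖x - o‖ ≤ r_B →
      (1 - lam / 6) * (‖q - x‖ - lam * d_min) ≤ ‖q - p‖ := by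
    intro x hxP hxB
    obtain ⟨y, hyR, hxy⟩ := hrep x hxP hxB
    have hyo : ‖y - o‖ ≤ (1 + lam) * r_B := by
      calc ‖y - o‖ ≤ ‖y - x‖ + ‖x - o‖ := norm_sub_le_norm_sub_add_norm_sub y x o
        _ ≤ lam * d_min + r_B := by
            rw [norm_sub_rev]; exact add_le_add hxy hxB
        _ ≤ (1 + lam) * r_B := by nlinarith
    have hqy : ‖q - x‖ - lam * d_min ≤ ‖q - y‖ := by
      have := norm_sub_le_norm_sub_add_norm_sub q y x
      rw [norm_sub_rev y x] at this
      linarith [norm_sub_le_norm_sub_add_norm_sub q y x]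
    have hfar := hpfar y hyR hyo
    nlinarith
  constructor
  · nlinarith [mul_pos hlam0 hrB, mul_pos (mul_pos hlam0 hlam0) hrB]
  · intro x hxP hxB
    rcases le_or_gt (1 - 2 * lam) 0 with h | h
    · have : 0 ≤ ‖q - p‖ := norm_nonneg _
      nlinarith [norm_nonneg (q - x)]
    · rcases le_or_gt d_min ‖q - x‖ with hc | hc
      · have := key x hxP hxB
        nlinarith [mul_le_mul_of_nonneg_left hc hlam0.le,
          mul_pos hlam0 hdmin0, mul_pos (mul_pos hlam0 hlam0) hdmin0]
      · have h0 := key x₀ hx₀P hx₀B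
        nlinarith [mul_le_mul_of_nonneg_left hx₀q (by linarith : (0:ℝ) ≤ 1 - lam / 6),
          mul_lt_mul_of_pos_left hc h,
          mul_pos hlam0 hdmin0, mul_pos (mul_pos hlam0 hlam0) hdmin0]
end

section
/- Work in ℝ^d = EuclideanSpace ℝ (Fin d) with d ≥ 1. Let 0 ≤ ε_A < 1, ε′ ≥ 0 and ε ≥ 0 satisfy (1+ε′)/(1−ε_A) ≤ 1+ε. Let S ⊆ T be finite sets in ℝ^d, let c ∈ ℝ^d and r > 0 be such that: S ⊆ closedBall(c, r); every closed ball containing S has radius at least r/(1+ε′); and T ⊆ closedBall(c, r/(1−ε_A)). Then closedBall(c, r/(1−ε_A)) is a (1+ε)-approximate minimum enclosing ball of T, i.e., T ⊆ closedBall(c, r/(1−ε_A)) and every closed ball containing T has radius at least (r/(1−ε_A))/(1+ε). -/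
/-- Enlargement argument from Case (3) of the AMEB correctness proof: if
`closedBall c r` is a `(1+ε′)`-approximate MEB of `S` and the enlarged ball
`closedBall c (r/(1−ε_A))` contains `T ⊇ S`, then the enlarged ball is a
`(1+ε)`-approximate MEB of `T` whenever `(1+ε′)/(1−ε_A) ≤ 1+ε`. -/
theorem stmt15 (d : ℕ) (hd : 1 ≤ d)
    (ε_A ε' ε : ℝ) (hεA0 : 0 ≤ ε_A) (hεA1 : ε_A < 1) (hε'0 : 0 ≤ ε') (hε0 : 0 ≤ ε)
    (hratio : (1 + ε') / (1 - ε_A) ≤ 1 + ε)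
    (S T : Finset (EuclideanSpace ℝ (Fin d))) (hST : S ⊆ T)
    (c : EuclideanSpace ℝ (Fin d)) (r : ℝ) (hr : 0 < r)
    (hSc : ∀ x ∈ S, ‖x - c‖ ≤ r)
    (hMEB : ∀ (z : EuclideanSpace ℝ (Fin d)) (s : ℝ), 0 ≤ s →
      (∀ x ∈ S, ‖x - z‖ ≤ s) → r / (1 + ε') ≤ s)
    (hTc : ∀ x ∈ T, ‖x - c‖ ≤ r / (1 - ε_A)) :
    (∀ x ∈ T, ‖x - c‖ ≤ r / (1 - ε_A)) ∧
    (∀ (z : EuclideanSpace ℝ (Fin d)) (s : ℝ), 0 ≤ s →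
      (∀ x ∈ T, ‖x - z‖ ≤ s) → (r / (1 - ε_A)) / (1 + ε) ≤ s) := by
  refine ⟨hTc, fun z s hs hball => ?_⟩
  have h1 : r / (1 + ε') ≤ s := hMEB z s hs fun x hx => hball x (hST hx)
  have hA : (0:ℝ) < 1 - ε_A := by linarith
  have hε1 : (0:ℝ) < 1 + ε := by linarith
  have hε'1 : (0:ℝ) < 1 + ε' := by linarith
  have key : (r / (1 - ε_A)) / (1 + ε) ≤ r / (1 + ε') := by
    rw [div_div, div_le_div_iff₀ (by positivity) hε'1]
    have : (1 + ε') ≤ (1 + ε) * (1 - ε_A) := by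
      rw [div_le_iff₀ hA] at hratio; linarith
    nlinarith
  linarith
end
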